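/- Let θ ∈ (0,1) and p_k = θ(1−θ)^{k−1}. Then Σ_{k,l≥1} p_k p_l / max(k,l) = Σ_{k≥1} p_k/k − g(1−θ), where g(z) = Σ_{k≥1} z^k(1−z^k)/(k(k+1)). -/

import Mathlib

/-!
Telescoping gives `1/(n+1) = ∑_{m ≥ n} 1/((m+1)(m+2))`, so after exchanging the order of
summation `E[1/(X+1)] = ∑_m P(X ≤ m)/((m+1)(m+2))` for any `ℕ`-valued `X`. With `z = 1 - θ`,
`P(η ≤ m+1) = 1 - z^(m+1)` and `P(max(η₁, η₂) ≤ m+1) = (1 - z^(m+1))^2`, and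
`(1 - w) - (1 - w)^2 = w(1 - w)` produces the terms of `g(z)`.
-/

open Filter Finset Topology

theorem hasSum_one_div_succ_mul_succ_succ_add (n : ℕ) :
    HasSum (fun m : ℕ => 1 / ((((m + n : ℕ) : ℝ) + 1) * (((m + n : ℕ) : ℝ) + 2)))
      (1 / (n + 1)) := by
  set u : ℕ → ℝ := fun m => 1 / (((m + n : ℕ) : ℝ) + 1)
  have hterm : ∀ m,
      1 / ((((m + n : ℕ) : ℝ) + 1) * (((m + n : ℕ) : ℝ) + 2)) = u m - u (m + 1) := by
    intro m
    simp only [u]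
    push_cast
    field_simp
    ring
  simp only [hterm]
  rw [hasSum_iff_tendsto_nat_of_nonneg (fun m => by simp only [← hterm]; positivity)]
  simp only [sum_range_sub']
  have hu : Tendsto u atTop (𝓝 0) := by
    have := (tendsto_add_atTop_iff_nat (f := fun m : ℕ => 1 / ((m : ℝ) + 1)) n).mpr
      tendsto_one_div_add_atTop_nhds_zero_nat
    simpa [u] using this
  simpa [u] using hu.const_sub (1 / ((n : ℝ) + 1))

theorem hasSum_ite_le_one_div_succ_mul_succ_succ (n : ℕ) :
    HasSum (fun m : ℕ => if n ≤ m then 1 / (((m : ℝ) + 1) * ((m : ℝ) + 2)) else 0)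
      (1 / (n + 1)) := by
  rw [← hasSum_nat_add_iff' n]
  have hhead :
      ∑ i ∈ range n, (if n ≤ i then 1 / (((i : ℝ) + 1) * ((i : ℝ) + 2)) else 0) = 0 :=
    sum_eq_zero fun i hi => if_neg (by simpa using hi)
  rw [hhead, sub_zero]
  simpa only [Nat.le_add_left, if_true] using hasSum_one_div_succ_mul_succ_succ_add n

theorem hasSum_tsum_indicator_le_div {α : Type*} {f : α → ℝ} (hf : Summable f) (r : α → ℕ) :
    HasSum
      (fun m : ℕ => (∑' a, {a | r a ≤ m}.indicator f a) / (((m : ℝ) + 1) * ((m : ℝ) + 2)))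
      (∑' a, f a / ((r a : ℝ) + 1)) := by
  set c : ℕ → ℝ := fun m => 1 / (((m : ℝ) + 1) * ((m : ℝ) + 2))
  set F : α × ℕ → ℝ := fun x => if r x.1 ≤ x.2 then f x.1 * c x.2 else 0
  have hc : Summable c := by
    simpa [c] using (hasSum_ite_le_one_div_succ_mul_succ_succ 0).summable
  have hF : Summable F := by
    refine Summable.of_norm_bounded (hf.norm.mul_norm hc.norm) fun x => ?_
    simp only [F]
    split_ifs
    · rfl
    · simp only [norm_zero]; positivity
  have hfibre_left : ∀ a, HasSum (fun m => F (a, m)) (f a / ((r a : ℝ) + 1)) := by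
    intro a
    simpa only [F, c, mul_ite, mul_zero, mul_one_div] using
      (hasSum_ite_le_one_div_succ_mul_succ_succ (r a)).mul_left (f a)
  have hfibre_right : ∀ m, ∑' a, F (a, m) = (∑' a, {a | r a ≤ m}.indicator f a) * c m := by
    intro m
    rw [← tsum_mul_right]
    refine tsum_congr fun a => ?_
    simp only [F, Set.indicator_apply, Set.mem_ofPred_eq, ite_mul, zero_mul]
  have hleft := hF.hasSum.prod_fiberwise hfibre_left
  have hright := ((Equiv.prodComm ℕ α).hasSum_iff.mpr hF.hasSum).prod_fiberwise
    fun m => ((Equiv.prodComm ℕ α).summable_iff.mpr hF |>.prod_factor m).hasSum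
  rw [hleft.tsum_eq]
  simpa only [Function.comp_def, Equiv.prodComm_apply, Prod.swap_prod_mk, hfibre_right, c,
    mul_one_div] using hright

theorem sum_range_mul_one_sub_pow {R : Type*} [CommRing R] (θ : R) (n : ℕ) :
    ∑ k ∈ range n, θ * (1 - θ) ^ k = 1 - (1 - θ) ^ n := by
  simpa [← mul_sum] using mul_neg_geom_sum (1 - θ) n

theorem tsum_indicator_le_mul_one_sub_pow (θ : ℝ) (m : ℕ) :
    ∑' k, {k : ℕ | k ≤ m}.indicator (fun k => θ * (1 - θ) ^ k) k
      = 1 - (1 - θ) ^ (m + 1) := by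
  have hset : {k : ℕ | k ≤ m} = ↑(range (m + 1)) := by ext; simp
  rw [hset, ← sum_eq_tsum_indicator, sum_range_mul_one_sub_pow]

theorem tsum_indicator_max_le_mul_one_sub_pow (θ : ℝ) (m : ℕ) :
    ∑' kl : ℕ × ℕ, {kl : ℕ × ℕ | max kl.1 kl.2 ≤ m}.indicator
      (fun kl => θ * (1 - θ) ^ kl.1 * (θ * (1 - θ) ^ kl.2)) kl
      = (1 - (1 - θ) ^ (m + 1)) ^ 2 := by
  have hset : {kl : ℕ × ℕ | max kl.1 kl.2 ≤ m} = ↑(range (m + 1) ×ˢ range (m + 1)) := by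
    ext; simp
  rw [hset, ← sum_eq_tsum_indicator, sum_product]
  simp only [← sum_mul_sum, sum_range_mul_one_sub_pow, sq]

/-- With `p_k = θ(1-θ)^{k-1}`,
`∑_{k,l ≥ 1} p_k p_l / max(k,l) = ∑_{k ≥ 1} p_k/k − g(1-θ)`,
where `g(z) = ∑_{k ≥ 1} z^k(1-z^k)/(k(k+1))`. -/
theorem stmt_19 (θ : ℝ) (hθ : θ ∈ Set.Ioo (0 : ℝ) 1) :
    ∑' kl : ℕ × ℕ, (θ * (1 - θ) ^ kl.1) * (θ * (1 - θ) ^ kl.2) / (max (kl.1 + 1) (kl.2 + 1))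
      = (∑' k : ℕ, (θ * (1 - θ) ^ k) / (k + 1))
        - ∑' k : ℕ, (1 - θ) ^ (k + 1) * (1 - (1 - θ) ^ (k + 1)) / ((k + 1) * (k + 2)) := by
  obtain ⟨hθ0, hθ1⟩ := hθ
  have hp : Summable fun k : ℕ => θ * (1 - θ) ^ k :=
    (summable_geometric_of_abs_lt_one (abs_lt.mpr ⟨by linarith, by linarith⟩)).mul_left θ
  have hA := hasSum_tsum_indicator_le_div hp (fun k => k)
  have hB := hasSum_tsum_indicator_le_div (summable_mul_of_summable_norm hp.norm hp.norm)
    (fun kl => max kl.1 kl.2)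
  simp only [tsum_indicator_le_mul_one_sub_pow, tsum_indicator_max_le_mul_one_sub_pow] at hA hB
  have hmax (k l : ℕ) : ((max (k + 1) (l + 1) : ℕ) : ℝ) = ((max k l : ℕ) : ℝ) + 1 := by
    push_cast [Nat.succ_max_succ]; rfl
  have hg : ∑' k : ℕ, (1 - θ) ^ (k + 1) * (1 - (1 - θ) ^ (k + 1)) / ((k + 1) * (k + 2))
      = (∑' k : ℕ, (θ * (1 - θ) ^ k) / (k + 1))
        - ∑' kl : ℕ × ℕ,
            (θ * (1 - θ) ^ kl.1) * (θ * (1 - θ) ^ kl.2) / ((max kl.1 kl.2 : ℕ) + 1) := by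
    rw [← (hA.sub hB).tsum_eq]
    exact tsum_congr fun k => by ring
  simp only [hg, hmax, sub_sub_cancel]
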